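/- The expansion of ε2 in the variable q^{1/2} = e^{πiτ} begins ε2(τ) = q^{1/2} + 8q + 28q^{3/2} + ⋯; precisely, ε2 is a holomorphic function of t = q^{1/2} on the punctured unit disc extending holomorphically to t = 0, and its Taylor coefficients at t = 0 in degrees 0, 1, 2, 3 are 0, 1, 8 and 28 respectively. -/

import Mathlib

open Complex Real

/-- The nome `q = e^{2πiτ}`. -/
noncomputable def qq (τ : ℂ) : ℂ := Complex.exp (2 * π * Complex.I * τ)

/-- The half-nome `q^{1/2} = e^{πiτ}`. -/
noncomputable def qh (τ : ℂ) : ℂ := Complex.exp (π * Complex.I * τ)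

/-- The Jacobi theta constant `θ₁(0,τ) = 2 q^{1/8} ∏_{j≥1} (1-q^j)(1+q^j)^2`. -/
noncomputable def theta1 (τ : ℂ) : ℂ :=
  2 * Complex.exp (π * Complex.I * τ / 4) *
    ∏' j : ℕ, ((1 - qq τ ^ (j + 1)) * (1 + qq τ ^ (j + 1)) ^ 2)

/-- The Jacobi theta constant `θ₂(0,τ) = ∏_{j≥1} (1-q^j)(1-q^{j-1/2})^2`. -/
noncomputable def theta2 (τ : ℂ) : ℂ :=
  ∏' j : ℕ, ((1 - qq τ ^ (j + 1)) * (1 - qh τ ^ (2 * j + 1)) ^ 2)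

/-- The Jacobi theta constant `θ₃(0,τ) = ∏_{j≥1} (1-q^j)(1+q^{j-1/2})^2`. -/
noncomputable def theta3 (τ : ℂ) : ℂ :=
  ∏' j : ℕ, ((1 - qq τ ^ (j + 1)) * (1 + qh τ ^ (2 * j + 1)) ^ 2)

/-- `ε₂(τ) = θ₁(0,τ)⁴ θ₃(0,τ)⁴/16`. -/
noncomputable def epsilon2 (τ : ℂ) : ℂ := theta1 τ ^ 4 * theta3 τ ^ 4 / 16

/-!
Write `t = q^{1/2}`, so that `q = t²` and `(2q^{1/8})⁴/16 = t`. Then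
`ε₂ = t · (∏_{j≥1} (1 - t^{2j})(1 + t^{2j})²)⁴ · (∏_{j≥1} (1 - t^{2j})(1 + t^{2j-1})²)⁴`.
The `j`-th factor of either product is `1 + O(|t|^j)` uniformly on the unit disc, so both products
are holomorphic there. Modulo `t³` every factor after the first is `≡ 1`, hence the two products
are `≡ 1 + t²` and `≡ 1 + 2t`, whose product is `≡ (1 + t)²`. Therefore `ε₂ ≡ t (1 + t)⁸` modulo
`t⁴`, and `1, 8, 28` are the binomial coefficients `C(8, k)`, `k ≤ 2`. An analytic function
that is `O(t⁴)` at `0` has vanishing Taylor coefficients in degrees `< 4`.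
-/

open Filter Topology Asymptotics Metric
open scoped Nat

theorem Real.exp_sub_one_le_mul_exp {x : ℝ} : Real.exp x - 1 ≤ x * Real.exp x := by
  have h := Real.add_one_le_exp (-x)
  have hinv : Real.exp x * Real.exp (-x) = 1 := by
    rw [← Real.exp_add, add_neg_cancel, Real.exp_zero]
  nlinarith [Real.exp_pos x]

section

variable {𝕜 : Type*} [NontriviallyNormedField 𝕜]

def EqModPow (m : ℕ) (f g : 𝕜 → 𝕜) : Prop :=
  (fun z => f z - g z) =O[𝓝 0] fun z => z ^ m

namespace EqModPow

theorem refl (m : ℕ) (f : 𝕜 → 𝕜) : EqModPow m f f := by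
  simpa [EqModPow] using isBigO_zero _ _

variable {m : ℕ} {f f' g g' h : 𝕜 → 𝕜}

theorem trans (hfg : EqModPow m f g) (hgh : EqModPow m g h) : EqModPow m f h :=
  (IsBigO.add hfg hgh).congr_left fun z => by ring

theorem congr_left (hf : f =ᶠ[𝓝 0] f') (hfg : EqModPow m f g) : EqModPow m f' g :=
  IsBigO.congr' hfg (hf.mono fun z hz => by simp only [hz]) EventuallyEq.rfl

theorem of_eq_add_pow_mul (hh : ContinuousAt h 0) (hfg : ∀ z, f z = g z + z ^ m * h z) :
    EqModPow m f g := by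
  have : (fun z => z ^ m * h z) =O[𝓝 0] fun z => z ^ m * 1 :=
    (isBigO_refl _ _).mul (hh.tendsto.isBigO_one 𝕜)
  simpa [EqModPow, hfg] using this

theorem isBigO_one (hfg : EqModPow m f g) (hg : ContinuousAt g 0) : f =O[𝓝 0] (1 : 𝕜 → 𝕜) := by
  have hpow : (fun z : 𝕜 => z ^ m) =O[𝓝 0] (1 : 𝕜 → 𝕜) :=
    ((continuous_pow m).tendsto 0).isBigO_one 𝕜
  exact ((IsBigO.trans hfg hpow).add (hg.tendsto.isBigO_one 𝕜)).congr_left fun z => by ring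

theorem mul (hf : EqModPow m f f') (hg : EqModPow m g g') (hf' : ContinuousAt f' 0)
    (hg' : ContinuousAt g' 0) : EqModPow m (f * g) (f' * g') := by
  have h1 : (fun z => (f z - f' z) * g z) =O[𝓝 0] fun z => z ^ m := by
    simpa using IsBigO.mul hf (hg.isBigO_one hg')
  have h2 : (fun z => f' z * (g z - g' z)) =O[𝓝 0] fun z => z ^ m := by
    simpa using IsBigO.mul (hf'.tendsto.isBigO_one 𝕜) hg
  exact (h1.add h2).congr_left fun z => by simp only [Pi.mul_apply]; ring

theorem pow (hf : EqModPow m f f') (hf' : ContinuousAt f' 0) (k : ℕ) :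
    EqModPow m (f ^ k) (f' ^ k) := by
  induction k with
  | zero => simpa using refl m 1
  | succ k ih => simpa [pow_succ] using ih.mul hf (hf'.pow k) hf'

theorem id_mul (hfg : EqModPow m f g) : EqModPow (m + 1) (fun z => z * f z) fun z => z * g z :=
  ((isBigO_refl (fun z : 𝕜 => z) _).mul hfg).congr (fun z => by ring) fun z => by ring

end EqModPow

theorem AnalyticAt.natCast_le_analyticOrderAt_of_isBigO {E : Type*} [NormedAddCommGroup E]
    [NormedSpace 𝕜 E] {f : 𝕜 → E} {z₀ : 𝕜} {n : ℕ} (hf : AnalyticAt 𝕜 f z₀)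
    (h : f =O[𝓝 z₀] fun z => (z - z₀) ^ n) : (n : ℕ∞) ≤ analyticOrderAt f z₀ := by
  by_contra! hlt
  obtain ⟨m, hm⟩ := ENat.ne_top_iff_exists.mp hlt.ne_top
  have hmn : m < n := by rw [← hm] at hlt; exact_mod_cast hlt
  obtain ⟨g, hg, hg0, hfg⟩ := hf.analyticOrderAt_eq_natCast.mp hm.symm
  obtain ⟨C, hC⟩ := h.bound
  have hbound : Tendsto (fun z => C * ‖z - z₀‖ ^ (n - m)) (𝓝[≠] z₀) (𝓝 0) := by
    have : Tendsto (fun z => C * ‖z - z₀‖ ^ (n - m)) (𝓝 z₀) (𝓝 (C * ‖z₀ - z₀‖ ^ (n - m))) :=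
      (continuous_const.mul ((continuous_id.sub continuous_const).norm.pow _)).tendsto z₀
    simpa [zero_pow (Nat.sub_ne_zero_of_lt hmn)] using this.mono_left nhdsWithin_le_nhds
  have hlim : Tendsto g (𝓝[≠] z₀) (𝓝 0) := by
    refine squeeze_zero_norm' ?_ hbound
    filter_upwards [nhdsWithin_le_nhds (hC.and hfg), self_mem_nhdsWithin] with z ⟨hle, heq⟩ hz
    have hpos : 0 < ‖z - z₀‖ ^ m := pow_pos (norm_pos_iff.mpr (sub_ne_zero.mpr hz)) m
    rw [heq, norm_smul, norm_pow, norm_pow, ← Nat.add_sub_cancel' hmn.le, pow_add] at hle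
    exact le_of_mul_le_mul_left (by linarith) hpos
  exact hg0 (tendsto_nhds_unique hg.continuousAt.continuousWithinAt hlim)

theorem iteratedDeriv_div_factorial_eq_of_eqModPow [CharZero 𝕜] [CompleteSpace 𝕜]
    {f : 𝕜 → 𝕜} {n : ℕ} (c : Fin n → 𝕜) (hf : AnalyticAt 𝕜 f 0)
    (h : EqModPow n f fun z => ∑ i : Fin n, c i * z ^ (i : ℕ)) (k : Fin n) :
    iteratedDeriv k f 0 / (k : ℕ)! = c k := by
  set P : 𝕜 → 𝕜 := fun z => ∑ i : Fin n, c i * z ^ (i : ℕ)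
  have hP : AnalyticAt 𝕜 P 0 := by fun_prop
  have hzero : iteratedDeriv k (f - P) 0 = 0 :=
    (natCast_le_analyticOrderAt_iff_iteratedDeriv_eq_zero (hf.sub hP)).mp
      ((hf.sub hP).natCast_le_analyticOrderAt_of_isBigO (by simp only [sub_zero]; exact h)) k k.isLt
  rw [iteratedDeriv_sub hf.contDiffAt hP.contDiffAt, sub_eq_zero] at hzero
  have hPk : iteratedDeriv k P 0 = (k : ℕ)! * c k := by
    have hterm : ∀ i : Fin n, iteratedDeriv k (fun z => c i * z ^ (i : ℕ)) 0 =
        if i = k then (k : ℕ)! * c k else 0 := by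
      intro i
      rw [iteratedDeriv_const_mul _ (by fun_prop), iteratedDeriv_pow]
      split_ifs with hik
      · subst hik; simp [Nat.descFactorial_self, mul_comm]
      · rcases lt_or_gt_of_ne (Fin.val_ne_of_ne hik) with hlt | hgt
        · simp [Nat.descFactorial_eq_zero_iff_lt.mpr hlt]
        · simp [zero_pow (Nat.sub_ne_zero_of_lt hgt)]
    rw [show P = ∑ i : Fin n, fun z => c i * z ^ (i : ℕ) by ext; simp [P],
      iteratedDeriv_sum fun i _ => by fun_prop]
    simp [hterm]
  rw [hzero, hPk, mul_div_cancel_left₀ _ (Nat.cast_ne_zero.mpr (k : ℕ).factorial_ne_zero)]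

theorem norm_tprod_one_add_sub_one_le {ι R : Type*} [NormedCommRing R] [NormOneClass R]
    [CompleteSpace R] {a : ι → R} (ha : Summable fun i => ‖a i‖) :
    ‖∏' i, (1 + a i) - 1‖ ≤ Real.exp (∑' i, ‖a i‖) - 1 := by
  refine le_of_tendsto' ((multipliable_one_add_of_summable ha).hasProd.sub_const 1).norm
    fun s => (s.norm_prod_one_add_sub_one_le a).trans ?_
  gcongr
  exact ha.sum_le_tsum s fun i _ => norm_nonneg _

theorem multipliable_of_norm_sub_one_le [CompleteSpace 𝕜] {a : ℕ → 𝕜} {C r : ℝ} (hr0 : 0 ≤ r)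
    (hr1 : r < 1) (ha : ∀ j, ‖a j - 1‖ ≤ C * r ^ j) : Multipliable a := by
  simpa using multipliable_one_add_of_summable
    (((summable_geometric_of_lt_one hr0 hr1).mul_left C).of_nonneg_of_le
      (fun _ => norm_nonneg _) ha)

theorem eqModPow_tprod_one_of_norm_sub_one_le [CompleteSpace 𝕜] {f : ℕ → 𝕜 → 𝕜} {m : ℕ}
    {C : ℝ} (hf : ∀ᶠ t in 𝓝 0, ∀ j, ‖f j t - 1‖ ≤ C * ‖t‖ ^ (j + m)) :
    EqModPow m (fun t => ∏' j, f j t) 1 := by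
  refine IsBigO.of_bound (2 * |C| * Real.exp (2 * |C|)) ?_
  filter_upwards [closedBall_mem_nhds (0 : 𝕜) one_half_pos, hf] with t hts htf
  rw [mem_closedBall_zero_iff] at hts
  have htg : ∀ j, ‖f j t - 1‖ ≤ |C| * ‖t‖ ^ m * ‖t‖ ^ j := fun j => by
    rw [mul_assoc, ← pow_add, add_comm m]
    exact (htf j).trans (by gcongr; exact le_abs_self C)
  have hgeom : HasSum (fun j => |C| * ‖t‖ ^ m * ‖t‖ ^ j) (|C| * ‖t‖ ^ m * (1 - ‖t‖)⁻¹) :=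
    (hasSum_geometric_of_lt_one (norm_nonneg t) (by linarith)).mul_left _
  have hsum : Summable fun j => ‖f j t - 1‖ :=
    hgeom.summable.of_nonneg_of_le (fun j => norm_nonneg _) htg
  have hS : ∑' j, ‖f j t - 1‖ ≤ 2 * |C| * ‖t‖ ^ m := by
    refine (hsum.tsum_le_tsum htg hgeom.summable).trans ?_
    have : (1 - ‖t‖)⁻¹ ≤ 2 := by
      rw [inv_le_comm₀ (by linarith) (by norm_num)]; linarith
    calc ∑' j, |C| * ‖t‖ ^ m * ‖t‖ ^ j = |C| * ‖t‖ ^ m * (1 - ‖t‖)⁻¹ := hgeom.tsum_eq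
      _ ≤ |C| * ‖t‖ ^ m * 2 := by gcongr
      _ = 2 * |C| * ‖t‖ ^ m := by ring
  have hx : 2 * |C| * ‖t‖ ^ m ≤ 2 * |C| :=
    mul_le_of_le_one_right (by positivity) (pow_le_one₀ (norm_nonneg t) (by linarith))
  calc ‖∏' j, f j t - 1‖ = ‖∏' j, (1 + (f j t - 1)) - 1‖ := by simp
    _ ≤ Real.exp (∑' j, ‖f j t - 1‖) - 1 := norm_tprod_one_add_sub_one_le hsum
    _ ≤ Real.exp (2 * |C| * ‖t‖ ^ m) - 1 := by gcongr
    _ ≤ 2 * |C| * ‖t‖ ^ m * Real.exp (2 * |C| * ‖t‖ ^ m) := Real.exp_sub_one_le_mul_exp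
    _ ≤ 2 * |C| * ‖t‖ ^ m * Real.exp (2 * |C|) := by gcongr
    _ = 2 * |C| * Real.exp (2 * |C|) * ‖t ^ m‖ := by rw [norm_pow]; ring

theorem eqModPow_tprod_of_norm_sub_one_le [CompleteSpace 𝕜] {f : ℕ → 𝕜 → 𝕜} {m : ℕ} {C : ℝ}
    (hf0 : ContinuousAt (f 0) 0)
    (hf : ∀ᶠ t in 𝓝 0, ∀ j, ‖f (j + 1) t - 1‖ ≤ C * ‖t‖ ^ (j + m)) :
    EqModPow m (fun t => ∏' j, f j t) (f 0) := by
  have hsplit : (fun t => f 0 t * ∏' j, f (j + 1) t) =ᶠ[𝓝 0] fun t => ∏' j, f j t := by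
    filter_upwards [hf, ball_mem_nhds (0 : 𝕜) one_pos] with t ht ht1
    rw [mem_ball_zero_iff] at ht1
    have htail : Multipliable fun j => f (j + 1) t :=
      multipliable_of_norm_sub_one_le (C := C * ‖t‖ ^ m) (norm_nonneg t) ht1 fun j => by
        rw [mul_assoc, ← pow_add, add_comm m]
        exact ht j
    exact (tprod_eq_zero_mul' (f := fun j => f j t) htail).symm
  simpa using ((EqModPow.refl m (f 0)).mul (eqModPow_tprod_one_of_norm_sub_one_le hf) hf0
    continuousAt_const).congr_left hsplit

theorem differentiableOn_tprod_of_norm_sub_one_le {f : ℕ → ℂ → ℂ} {C : ℝ}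
    (hd : ∀ j, DifferentiableOn ℂ (f j) (ball 0 1))
    (hf : ∀ j, ∀ t ∈ ball (0 : ℂ) 1, ‖f j t - 1‖ ≤ C * ‖t‖ ^ j) :
    DifferentiableOn ℂ (fun t => ∏' j, f j t) (ball 0 1) := by
  intro t₀ ht₀
  rw [mem_ball_zero_iff] at ht₀
  obtain ⟨r, htr, hr⟩ := exists_between ht₀
  have hsub : ball (0 : ℂ) r ⊆ ball 0 1 := ball_subset_ball hr.le
  have hprod : HasProdLocallyUniformlyOn (fun j t => 1 + (f j t - 1))
      (fun t => ∏' j, (1 + (f j t - 1))) (ball 0 r) :=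
    Summable.hasProdLocallyUniformlyOn_nat_one_add isOpen_ball
      ((summable_geometric_of_lt_one ((norm_nonneg t₀).trans htr.le) hr).mul_left |C|)
      (.of_forall fun j t ht => (hf j t (hsub ht)).trans (by
        gcongr
        · exact le_abs_self C
        · exact (mem_ball_zero_iff.mp ht).le))
      fun j => ((hd j).mono hsub).continuousOn.sub continuousOn_const
  simp only [add_sub_cancel] at hprod
  have hdiff : DifferentiableOn ℂ (fun t => ∏' j, f j t) (ball 0 r) :=
    hprod.differentiableOn
      (.of_forall fun s => DifferentiableOn.fun_finsetProd fun j _ => (hd j).mono hsub) isOpen_ball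
  exact (hdiff.differentiableAt (isOpen_ball.mem_nhds (mem_ball_zero_iff.mpr htr)))
    |>.differentiableWithinAt

end

theorem norm_one_sub_mul_one_add_sq_sub_one_le {𝕜 : Type*} [NormedField 𝕜] {a b : 𝕜}
    (hab : ‖a‖ ≤ ‖b‖) (hb : ‖b‖ ≤ 1) : ‖(1 - a) * (1 + b) ^ 2 - 1‖ ≤ 7 * ‖b‖ := by
  have h1 : ‖1 + b‖ ≤ 2 := (norm_add_le _ _).trans (by rw [norm_one]; linarith)
  have h2 : ‖b ^ 2‖ ≤ ‖b‖ := by rw [norm_pow]; nlinarith [norm_nonneg b]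
  calc ‖(1 - a) * (1 + b) ^ 2 - 1‖ = ‖(b + b + b ^ 2) - a * (1 + b) ^ 2‖ := by congr 1; ring
    _ ≤ ‖b‖ + ‖b‖ + ‖b ^ 2‖ + ‖a‖ * ‖1 + b‖ ^ 2 := by
      refine (norm_sub_le _ _).trans ?_
      rw [norm_mul, norm_pow]
      gcongr
      exact norm_add₃_le
    _ ≤ ‖b‖ + ‖b‖ + ‖b‖ + ‖b‖ * 2 ^ 2 := by gcongr
    _ = 7 * ‖b‖ := by ring

noncomputable def theta1Factor (j : ℕ) (t : ℂ) : ℂ :=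
  (1 - (t ^ 2) ^ (j + 1)) * (1 + (t ^ 2) ^ (j + 1)) ^ 2

noncomputable def theta3Factor (j : ℕ) (t : ℂ) : ℂ :=
  (1 - (t ^ 2) ^ (j + 1)) * (1 + t ^ (2 * j + 1)) ^ 2

theorem differentiable_theta1Factor (j : ℕ) : Differentiable ℂ (theta1Factor j) := by
  unfold theta1Factor; fun_prop

theorem differentiable_theta3Factor (j : ℕ) : Differentiable ℂ (theta3Factor j) := by
  unfold theta3Factor; fun_prop

noncomputable def epsilon2Halfq (t : ℂ) : ℂ :=
  t * (∏' j, theta1Factor j t) ^ 4 * (∏' j, theta3Factor j t) ^ 4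

theorem norm_theta1Factor_sub_one_le (j : ℕ) {t : ℂ} (ht : ‖t‖ ≤ 1) {k : ℕ} (hk : k ≤ 2 * j + 1) :
    ‖theta1Factor j t - 1‖ ≤ 7 * ‖t‖ ^ k := by
  have hb : ‖(t ^ 2) ^ (j + 1)‖ ≤ ‖t‖ ^ k := by
    rw [← pow_mul, norm_pow]
    exact pow_le_pow_of_le_one (norm_nonneg t) ht (by omega)
  exact (norm_one_sub_mul_one_add_sq_sub_one_le le_rfl
    (hb.trans (pow_le_one₀ (norm_nonneg t) ht))).trans (by gcongr)

theorem norm_theta3Factor_sub_one_le (j : ℕ) {t : ℂ} (ht : ‖t‖ ≤ 1) {k : ℕ} (hk : k ≤ 2 * j + 1) :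
    ‖theta3Factor j t - 1‖ ≤ 7 * ‖t‖ ^ k := by
  have hab : ‖(t ^ 2) ^ (j + 1)‖ ≤ ‖t ^ (2 * j + 1)‖ := by
    rw [← pow_mul, norm_pow, norm_pow]
    exact pow_le_pow_of_le_one (norm_nonneg t) ht (by omega)
  have hb : ‖t ^ (2 * j + 1)‖ ≤ ‖t‖ ^ k := by
    rw [norm_pow]
    exact pow_le_pow_of_le_one (norm_nonneg t) ht hk
  exact (norm_one_sub_mul_one_add_sq_sub_one_le hab
    (hb.trans (pow_le_one₀ (norm_nonneg t) ht))).trans (by gcongr)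

theorem epsilon2Halfq_qh (τ : ℂ) : epsilon2Halfq (qh τ) = epsilon2 τ := by
  have hqq : qq τ = qh τ ^ 2 := by
    rw [qq, qh, ← Complex.exp_nat_mul]; congr 1; push_cast; ring
  have hq8 : Complex.exp (π * Complex.I * τ / 4) ^ 4 = qh τ := by
    rw [qh, ← Complex.exp_nat_mul]; congr 1; push_cast; ring
  simp only [epsilon2Halfq, epsilon2, theta1, theta3, theta1Factor, theta3Factor, hqq, mul_pow, hq8]
  ring

theorem differentiableOn_epsilon2Halfq : DifferentiableOn ℂ epsilon2Halfq (ball 0 1) := by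
  have h1 := differentiableOn_tprod_of_norm_sub_one_le (C := 7)
    (fun j => (differentiable_theta1Factor j).differentiableOn)
    fun j t ht => norm_theta1Factor_sub_one_le j (mem_ball_zero_iff.mp ht).le (by omega)
  have h3 := differentiableOn_tprod_of_norm_sub_one_le (C := 7)
    (fun j => (differentiable_theta3Factor j).differentiableOn)
    fun j t ht => norm_theta3Factor_sub_one_le j (mem_ball_zero_iff.mp ht).le (by omega)
  exact (differentiableOn_id.mul (h1.pow 4)).mul (h3.pow 4)

theorem eqModPow_theta1Prod : EqModPow 3 (fun t => ∏' j, theta1Factor j t) fun t => 1 + t ^ 2 := by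
  refine (eqModPow_tprod_of_norm_sub_one_le (C := 7)
    (differentiable_theta1Factor 0).continuous.continuousAt ?_).trans
    (.of_eq_add_pow_mul (h := fun t => -t - t ^ 3) (by fun_prop) fun t => by
      simp only [theta1Factor]; ring)
  filter_upwards [closedBall_mem_nhds (0 : ℂ) one_pos] with t ht j
  exact norm_theta1Factor_sub_one_le (j + 1) (mem_closedBall_zero_iff.mp ht) (by omega)

theorem eqModPow_theta3Prod : EqModPow 3 (fun t => ∏' j, theta3Factor j t) fun t => 1 + 2 * t := by
  refine (eqModPow_tprod_of_norm_sub_one_le (C := 7)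
    (differentiable_theta3Factor 0).continuous.continuousAt ?_).trans
    (.of_eq_add_pow_mul (h := fun t => -2 - t) (by fun_prop) fun t => by
      simp only [theta3Factor]; ring)
  filter_upwards [closedBall_mem_nhds (0 : ℂ) one_pos] with t ht j
  exact norm_theta3Factor_sub_one_le (j + 1) (mem_closedBall_zero_iff.mp ht) (by omega)

theorem eqModPow_epsilon2Halfq : EqModPow 4 epsilon2Halfq fun t => t + 8 * t ^ 2 + 28 * t ^ 3 := by
  have hprod : EqModPow 3 ((fun t => ∏' j, theta1Factor j t) * fun t => ∏' j, theta3Factor j t)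
      fun t => (1 + t) ^ 2 :=
    (eqModPow_theta1Prod.mul eqModPow_theta3Prod (by fun_prop) (by fun_prop)).trans
      (.of_eq_add_pow_mul (h := fun _ => 2) continuousAt_const fun t => by
        simp only [Pi.mul_apply]; ring)
  have hbinom : EqModPow 3 ((fun t : ℂ => (1 + t) ^ 2) ^ 4) fun t => 1 + 8 * t + 28 * t ^ 2 :=
    .of_eq_add_pow_mul (h := fun t => 56 + 70 * t + 56 * t ^ 2 + 28 * t ^ 3 + 8 * t ^ 4 + t ^ 5)
      (by fun_prop) fun t => by simp only [Pi.pow_apply]; ring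
  convert ((hprod.pow (by fun_prop) 4).trans hbinom).id_mul using 1 <;> ext t
  · simp only [epsilon2Halfq, Pi.pow_apply, Pi.mul_apply]; ring
  · ring

/-- The expansion of `ε₂` in the variable `t = q^{1/2} = e^{πiτ}` begins
`ε₂ = q^{1/2} + 8q + 28q^{3/2} + ⋯`: `ε₂` is a holomorphic function of `t` on the punctured unit
disc extending holomorphically to `t = 0`, and its Taylor coefficients at `t = 0` in degrees
`0`, `1`, `2`, `3` are `0`, `1`, `8`, `28`. -/
theorem epsilon2_halfq_expansion :
    ∃ g : ℂ → ℂ, DifferentiableOn ℂ g (Metric.ball (0 : ℂ) 1) ∧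
      (∀ τ : ℂ, 0 < τ.im → g (qh τ) = epsilon2 τ) ∧
      g 0 = 0 ∧
      iteratedDeriv 1 g 0 / (Nat.factorial 1 : ℂ) = 1 ∧
      iteratedDeriv 2 g 0 / (Nat.factorial 2 : ℂ) = 8 ∧
      iteratedDeriv 3 g 0 / (Nat.factorial 3 : ℂ) = 28 := by
  have hcoeff := iteratedDeriv_div_factorial_eq_of_eqModPow (![0, 1, 8, 28] : Fin 4 → ℂ)
    (differentiableOn_epsilon2Halfq.analyticAt (ball_mem_nhds 0 one_pos))
    (by simpa [Fin.sum_univ_four] using eqModPow_epsilon2Halfq)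
  refine ⟨epsilon2Halfq, differentiableOn_epsilon2Halfq, fun τ _ => epsilon2Halfq_qh τ,
    by simp [epsilon2Halfq], ?_, ?_, ?_⟩
  · simpa using hcoeff 1
  · simpa using hcoeff 2
  · simpa using hcoeff 3
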